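/- arXiv:1309.1302 — 2 statements merged into one kernel-verified Lean document; each statement's English description precedes it below -/
import Mathlib

section
/- Let u ∈ C_c^∞(ℝ^N \ {0}), α ∈ ℝ, b, c ∈ ℝ, and define Lu = Δu + c (x/|x|²)·∇u - (b/|x|²)u. Set v(x) = |x|^{α-2} u(x). Then |x|^α (Lu)(x) = (L̃v)(x) - b v(x) for all x ≠ 0, where L̃v = |x|² Δv + (4 - 2α + c) x·∇v + (2-α)(N - α + c) v. -/
open MeasureTheory Set

theorem myNormRpowDeriv {N : ℕ} (p : ℝ) {y : EuclideanSpace ℝ (Fin N)} (hy : y ≠ 0) :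
    HasFDerivAt (fun z : EuclideanSpace ℝ (Fin N) => ‖z‖ ^ p)
      ((p * ‖y‖ ^ (p - 2)) • (innerSL ℝ y)) y := by
  have hyn : (0:ℝ) < ‖y‖ := norm_pos_iff.mpr hy
  have h1 : HasFDerivAt (fun z : EuclideanSpace ℝ (Fin N) => ‖z‖ ^ (2:ℕ))
      (2 • (innerSL ℝ y)) y := (hasStrictFDerivAt_norm_sq y).hasFDerivAt
  have h2 : HasDerivAt (fun t : ℝ => t ^ (p/2)) (p/2 * (‖y‖^(2:ℕ)) ^ (p/2 - 1)) (‖y‖^(2:ℕ)) :=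
    Real.hasDerivAt_rpow_const (Or.inl (by positivity))
  have h3 := h2.comp_hasFDerivAt y h1
  have hfn : (fun z : EuclideanSpace ℝ (Fin N) => ‖z‖ ^ p)
      = (fun t : ℝ => t ^ (p/2)) ∘ (fun z => ‖z‖ ^ (2:ℕ)) := by
    funext z
    simp only [Function.comp_apply, ← Real.rpow_natCast ‖z‖ 2,
      ← Real.rpow_mul (norm_nonneg z)]
    norm_num
    rw [show (2:ℝ) * (p/2) = p by ring]
  rw [hfn]
  refine h3.congr_fderiv ?_
  ext w
  have he : ((‖y‖ ^ (2:ℕ)) : ℝ) ^ (p/2 - 1) = ‖y‖ ^ (p - 2) := by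
    rw [← Real.rpow_natCast ‖y‖ 2, ← Real.rpow_mul (norm_nonneg y)]
    norm_num
    ring_nf
  simp [he, two_smul]
  ring

theorem myVDeriv {N : ℕ} (α : ℝ) (u : EuclideanSpace ℝ (Fin N) → ℂ)
    (hu : Differentiable ℝ u) {y : EuclideanSpace ℝ (Fin N)} (hy : y ≠ 0) :
    HasFDerivAt (fun z => (‖z‖ ^ (α - 2)) • u z)
      ((‖y‖ ^ (α-2)) • fderiv ℝ u y
        + ((((α:ℝ)-2) * ‖y‖ ^ (α-4)) • (innerSL ℝ y)).smulRight (u y)) y := by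
  have h1 := myNormRpowDeriv (N := N) (α-2) hy
  rw [show α-2-2 = α-4 by ring] at h1
  exact h1.smul (hu y).hasFDerivAt

theorem myVDeriv_apply {N : ℕ} (α : ℝ) (u : EuclideanSpace ℝ (Fin N) → ℂ)
    (hu : Differentiable ℝ u) {y : EuclideanSpace ℝ (Fin N)} (hy : y ≠ 0)
    (w : EuclideanSpace ℝ (Fin N)) :
    fderiv ℝ (fun z => (‖z‖ ^ (α - 2)) • u z) y w
      = (‖y‖ ^ (α-2)) • fderiv ℝ u y w
        + (((α:ℝ)-2) * ‖y‖ ^ (α-4) * (inner ℝ y w : ℝ)) • u y := by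
  rw [(myVDeriv α u hu hy).fderiv]
  simp [ContinuousLinearMap.smul_apply, smul_smul, mul_assoc]

theorem mySecondDeriv {N : ℕ} (α : ℝ) (u : EuclideanSpace ℝ (Fin N) → ℂ)
    (hu : ContDiff ℝ (⊤ : ℕ∞) u) {x : EuclideanSpace ℝ (Fin N)} (hx : x ≠ 0)
    (e : EuclideanSpace ℝ (Fin N)) :
    fderiv ℝ (fun y => fderiv ℝ (fun z => (‖z‖ ^ (α - 2)) • u z) y e) x e =
      (2 * (((α:ℝ)-2) * ‖x‖^(α-4) * (inner ℝ x e : ℝ))) • fderiv ℝ u x e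
      + (‖x‖^(α-2)) • fderiv ℝ (fderiv ℝ u) x e e
      + (((α:ℝ)-2) * (((α:ℝ)-4) * ‖x‖^(α-6) * (inner ℝ x e : ℝ) * (inner ℝ x e : ℝ)
          + ‖x‖^(α-4) * (inner ℝ e e : ℝ))) • u x := by
  have hu1 : Differentiable ℝ u := hu.differentiable (by simp)
  have hDu : ContDiff ℝ 1 (fderiv ℝ u) :=
    (hu.of_le ((WithTop.coe_le_coe.mpr le_top) : (2:WithTop ℕ∞) ≤ ((⊤ : ℕ∞) : WithTop ℕ∞))).fderiv_right
      (show (1:WithTop ℕ∞) + 1 ≤ 2 by norm_num)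
  have hmem : ∀ᶠ y in nhds x, y ≠ 0 := isOpen_compl_singleton.eventually_mem hx
  have heq : (fun y => fderiv ℝ (fun z => (‖z‖ ^ (α - 2)) • u z) y e) =ᶠ[nhds x]
      (fun y => (‖y‖ ^ (α-2)) • fderiv ℝ u y e
        + (((α:ℝ)-2) * ‖y‖ ^ (α-4) * (inner ℝ y e : ℝ)) • u y) := by
    filter_upwards [hmem] with y hy
    exact myVDeriv_apply α u hu1 hy e
  rw [heq.fderiv_eq]
  -- derivative of y ↦ fderiv u y e
  have hDud : DifferentiableAt ℝ (fderiv ℝ u) x := (hDu.differentiable one_ne_zero) x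
  have hA : HasFDerivAt (fun y => fderiv ℝ u y e)
      ((ContinuousLinearMap.apply ℝ ℂ e).comp (fderiv ℝ (fderiv ℝ u) x)) x :=
    (ContinuousLinearMap.apply ℝ ℂ e).hasFDerivAt.comp x hDud.hasFDerivAt
  have h2 := myNormRpowDeriv (N := N) (α-2) hx
  rw [show α-2-2 = α-4 by ring] at h2
  have h4 := myNormRpowDeriv (N := N) (α-4) hx
  rw [show α-4-2 = α-6 by ring] at h4
  have hInner : HasFDerivAt (fun y : EuclideanSpace ℝ (Fin N) => (inner ℝ y e : ℝ))
      (innerSL ℝ e) x := by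
    have h := (innerSL ℝ e).hasFDerivAt (x := x)
    have : (fun y : EuclideanSpace ℝ (Fin N) => (inner ℝ y e : ℝ))
        = fun y => (innerSL ℝ e) y := by
      funext y; simp only [innerSL_apply_apply]; exact real_inner_comm e y
    rw [this]
    exact h
  have hc : HasFDerivAt (fun y : EuclideanSpace ℝ (Fin N) => ((α:ℝ)-2) * ‖y‖^(α-4))
      (((α:ℝ)-2) • (((α-4) * ‖x‖ ^ (α-6)) • (innerSL ℝ x))) x := h4.const_mul _
  have hs := hc.mul hInner
  have hG := (h2.smul hA).add ((hs.smul (hu1 x).hasFDerivAt))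
  rw [(show HasFDerivAt (fun y => ‖y‖ ^ (α - 2) • fderiv ℝ u y e
    + ((α - 2) * ‖y‖ ^ (α - 4) * inner ℝ y e) • u y) _ x from hG).fderiv]
  simp only [ContinuousLinearMap.add_apply, ContinuousLinearMap.smul_apply,
    ContinuousLinearMap.comp_apply, ContinuousLinearMap.smulRight_apply,
    ContinuousLinearMap.apply_apply, innerSL_apply_apply, smul_smul, Pi.mul_apply]
  rw [real_inner_comm e x]
  simp only [smul_eq_mul]
  push_cast [Complex.real_smul]
  ring

/-- The Laplacian of a function on `ℝ^N`, as the sum of second partial derivatives. -/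
noncomputable def lap {N : ℕ} {F : Type*} [NormedAddCommGroup F] [NormedSpace ℝ F]
    (u : EuclideanSpace ℝ (Fin N) → F) (x : EuclideanSpace ℝ (Fin N)) : F :=
  ∑ i : Fin N, fderiv ℝ (fderiv ℝ u) x (EuclideanSpace.single i 1)
    (EuclideanSpace.single i 1)

/-- Pointwise identity reducing the weighted Rellich inequality for
`Lu = Δu + c (x/|x|²)·∇u - (b/|x|²) u` to the operator
`L̃v = |x|²Δv + (4 - 2α + c) x·∇v + (2-α)(N-α+c) v`, via `v = |x|^{α-2} u`:
`|x|^α Lu = L̃v - b v` on `ℝ^N \ {0}`. -/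
theorem stmt13 {N : ℕ} (α b c : ℝ)
    (u : EuclideanSpace ℝ (Fin N) → ℂ) (hu : ContDiff ℝ (⊤ : ℕ∞) u)
    (hcs : HasCompactSupport u)
    (h0 : (0 : EuclideanSpace ℝ (Fin N)) ∉ tsupport u)
    (v : EuclideanSpace ℝ (Fin N) → ℂ)
    (hv : v = fun x => (‖x‖ ^ (α - 2)) • u x)
    (x : EuclideanSpace ℝ (Fin N)) (hx : x ≠ 0) :
    (‖x‖ ^ α) •
        (lap u x + (c / ‖x‖ ^ 2) • fderiv ℝ u x x - (b / ‖x‖ ^ 2) • u x) =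
      ((‖x‖ ^ 2) • lap v x + (4 - 2 * α + c) • fderiv ℝ v x x +
          ((2 - α) * ((N : ℝ) - α + c)) • v x) - b • v x := by
  subst hv
  have hu1 : Differentiable ℝ u := hu.differentiable (by simp)
  have hr : (0:ℝ) < ‖x‖ := norm_pos_iff.mpr hx
  -- smoothness of v at x
  have hvC : ContDiffAt ℝ 2 (fun z : EuclideanSpace ℝ (Fin N) => (‖z‖ ^ (α - 2)) • u z) x := by
    have hn : ContDiffAt ℝ 2 (fun z : EuclideanSpace ℝ (Fin N) => ‖z‖ ^ (α-2)) x :=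
      (Real.contDiffAt_rpow_const_of_ne (ne_of_gt hr)).comp x (contDiffAt_norm ℝ hx)
    exact hn.smul (hu.contDiffAt.of_le (WithTop.coe_le_coe.mpr le_top))
  have hvd : DifferentiableAt ℝ (fderiv ℝ (fun z : EuclideanSpace ℝ (Fin N) =>
      (‖z‖ ^ (α - 2)) • u z)) x :=
    (hvC.fderiv_right (show (1:WithTop ℕ∞)+1 ≤ 2 by norm_num)).differentiableAt one_ne_zero
  have hrel : ∀ e : EuclideanSpace ℝ (Fin N),
      fderiv ℝ (fderiv ℝ (fun z : EuclideanSpace ℝ (Fin N) => (‖z‖^(α-2)) • u z)) x e e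
      = fderiv ℝ (fun y => fderiv ℝ (fun z : EuclideanSpace ℝ (Fin N) =>
          (‖z‖^(α-2)) • u z) y e) x e := by
    intro e
    have h := (ContinuousLinearMap.apply ℝ ℂ e).hasFDerivAt.comp x hvd.hasFDerivAt
    have h2 : (fun y => fderiv ℝ (fun z : EuclideanSpace ℝ (Fin N) =>
        (‖z‖^(α-2)) • u z) y e)
        = (ContinuousLinearMap.apply ℝ ℂ e) ∘ (fderiv ℝ (fun z : EuclideanSpace ℝ (Fin N) =>
          (‖z‖^(α-2)) • u z)) := rfl
    rw [h2, h.fderiv]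
    simp
  -- inner product facts
  have hix : ∀ i : Fin N, (inner ℝ x (EuclideanSpace.single i (1:ℝ)) : ℝ) = x i := by
    intro i; rw [EuclideanSpace.inner_single_right]; simp
  have hii : ∀ i : Fin N,
      (inner ℝ (EuclideanSpace.single i (1:ℝ)) (EuclideanSpace.single i (1:ℝ)) : ℝ) = 1 := by
    intro i; rw [EuclideanSpace.inner_single_right]; simp [EuclideanSpace.single_apply]
  have hsum1 : ∑ i : Fin N, x i • fderiv ℝ u x (EuclideanSpace.single i (1:ℝ))
      = fderiv ℝ u x x := by
    have hxd : ∑ i : Fin N, x i • (EuclideanSpace.single i (1:ℝ)) = x := by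
      have h := (EuclideanSpace.basisFun (Fin N) ℝ).sum_repr x
      simpa [EuclideanSpace.basisFun_apply, EuclideanSpace.basisFun_repr] using h
    calc ∑ i : Fin N, x i • fderiv ℝ u x (EuclideanSpace.single i (1:ℝ))
        = fderiv ℝ u x (∑ i : Fin N, x i • EuclideanSpace.single i (1:ℝ)) := by
          rw [map_sum]; simp
      _ = fderiv ℝ u x x := by rw [hxd]
  have hsum2 : ∑ i : Fin N, x i * x i = ‖x‖^(2:ℕ) := by
    rw [← real_inner_self_eq_norm_sq x]
    rw [PiLp.inner_apply]; simp only [RCLike.inner_apply, conj_trivial]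
  -- Laplacian of v
  have hlap : lap (fun z : EuclideanSpace ℝ (Fin N) => (‖z‖^(α-2)) • u z) x
      = (2 * ((α-2) * ‖x‖^(α-4))) • fderiv ℝ u x x
        + (‖x‖^(α-2)) • lap u x
        + ((α-2) * ((α-4) * ‖x‖^(α-6) * ‖x‖^(2:ℕ) + ‖x‖^(α-4) * N)) • u x := by
    unfold lap
    rw [Finset.sum_congr rfl (fun i _ => by
      rw [hrel _, mySecondDeriv α u hu hx _, hix i, hii i])]
    rw [Finset.sum_add_distrib, Finset.sum_add_distrib]
    congr 1
    · congr 1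
      · rw [Finset.sum_congr rfl (fun i _ => by
          rw [show (2 * ((α-2) * ‖x‖^(α-4) * x i)) • fderiv ℝ u x (EuclideanSpace.single i (1:ℝ))
              = (2 * ((α-2) * ‖x‖^(α-4))) • (x i • fderiv ℝ u x (EuclideanSpace.single i (1:ℝ)))
            from by rw [smul_smul]; ring_nf]),
          ← Finset.smul_sum, hsum1]
      · rw [← Finset.smul_sum]
    · rw [← Finset.sum_smul]
      congr 1
      rw [Finset.sum_congr rfl (fun i _ => by
        rw [show (α-2) * ((α-4) * ‖x‖^(α-6) * x i * x i + ‖x‖^(α-4) * 1)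
            = (α-2) * (α-4) * ‖x‖^(α-6) * (x i * x i) + (α-2) * ‖x‖^(α-4) from by ring]),
        Finset.sum_add_distrib, ← Finset.mul_sum, hsum2, Finset.sum_const,
        Finset.card_univ, Fintype.card_fin, nsmul_eq_mul]
      ring
  -- fderiv of v at x applied to x
  have hDvx : fderiv ℝ (fun z : EuclideanSpace ℝ (Fin N) => (‖z‖^(α-2)) • u z) x x
      = (‖x‖^(α-2)) • fderiv ℝ u x x + ((α-2) * ‖x‖^(α-4) * ‖x‖^(2:ℕ)) • u x := by
    rw [myVDeriv_apply α u hu1 hx x, real_inner_self_eq_norm_sq x]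
  rw [hlap, hDvx]
  -- rpow bookkeeping
  have e4 : ‖x‖^(α-4) = ‖x‖^(α-6) * ‖x‖^(2:ℕ) := by
    rw [← Real.rpow_natCast ‖x‖ 2, ← Real.rpow_add hr]; congr 1; ring
  have e2 : ‖x‖^(α-2) = ‖x‖^(α-6) * ‖x‖^(2:ℕ) * ‖x‖^(2:ℕ) := by
    rw [← Real.rpow_natCast ‖x‖ 2, ← Real.rpow_add hr, ← Real.rpow_add hr]; congr 1; ring
  have eα : ‖x‖^α = ‖x‖^(α-6) * ‖x‖^(2:ℕ) * ‖x‖^(2:ℕ) * ‖x‖^(2:ℕ) := by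
    rw [← Real.rpow_natCast ‖x‖ 2, ← Real.rpow_add hr, ← Real.rpow_add hr,
      ← Real.rpow_add hr]; congr 1; ring
  have hxc : (‖x‖ : ℂ) ≠ 0 := by exact_mod_cast hr.ne'
  simp only [Complex.real_smul, eα, e2, e4]
  push_cast
  field_simp
  ring
end

section
/- Let N ≥ 2 and β ∈ ℝ. The function Q₊(x) = x_N |x|^{-(N+β)/2} satisfies ΔQ₊ + β (x·∇Q₊)/|x|² = -[((N-2+β)/2)² + (N-1)] Q₊/|x|² on the open upper half-space {x_N > 0}. -/
/-!
With `p = -(N+β)/4` we have `Q₊(x) = ⟪e_N, x⟫ (‖x‖²)^p`, homogeneous of degree `2p+1`, so Euler's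
identity gives `x·∇Q₊ = (2p+1) Q₊`. Differentiating twice and tracing the Hessian gives
`ΔQ₊ = 2p(N+2p) Q₊/‖x‖²`, and `2p(N+2p) + β(2p+1) = -[((N-2+β)/2)² + (N-1)]`.
-/

open MeasureTheory Set

open scoped RealInnerProductSpace

section InnerProductSpace

variable {E : Type*} [NormedAddCommGroup E] [InnerProductSpace ℝ E]

theorem hasFDerivAt_norm_sq_rpow (p : ℝ) {y : E} (hy : y ≠ 0) :
    HasFDerivAt (fun z : E => (‖z‖ ^ 2) ^ p)
      ((2 * p * (‖y‖ ^ 2) ^ (p - 1)) • innerSL ℝ y) y := by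
  have hy2 : ‖y‖ ^ 2 ≠ 0 := by positivity
  refine ((hasStrictFDerivAt_norm_sq y).hasFDerivAt.rpow_const (Or.inl hy2)).congr_fderiv ?_
  ext v
  simp only [smul_apply, smul_eq_mul, nsmul_eq_mul, Nat.cast_ofNat]
  ring

noncomputable def innerMulNormSqRpow (a : E) (p : ℝ) (z : E) : ℝ :=
  ⟪a, z⟫ * (‖z‖ ^ 2) ^ p

noncomputable def innerMulNormSqRpowFDeriv (a : E) (p : ℝ) (y : E) : E →L[ℝ] ℝ :=
  (2 * p * ⟪a, y⟫ * (‖y‖ ^ 2) ^ (p - 1)) • innerSL ℝ y + (‖y‖ ^ 2) ^ p • innerSL ℝ a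

theorem hasFDerivAt_innerMulNormSqRpow (a : E) (p : ℝ) {y : E} (hy : y ≠ 0) :
    HasFDerivAt (innerMulNormSqRpow a p) (innerMulNormSqRpowFDeriv a p y) y := by
  refine ((innerSL ℝ a).hasFDerivAt.mul (hasFDerivAt_norm_sq_rpow p hy)).congr_fderiv ?_
  ext v
  simp only [coe_innerSL_apply, add_apply, smul_apply, smul_eq_mul, innerMulNormSqRpowFDeriv]
  ring

theorem fderiv_innerMulNormSqRpow_eventuallyEq (a : E) (p : ℝ) {y : E} (hy : y ≠ 0) :
    fderiv ℝ (innerMulNormSqRpow a p) =ᶠ[nhds y] innerMulNormSqRpowFDeriv a p :=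
  Filter.eventually_of_mem (isOpen_ne.mem_nhds hy) fun _ hz =>
    (hasFDerivAt_innerMulNormSqRpow a p hz).fderiv

theorem fderiv_innerMulNormSqRpow_apply_self (a : E) (p : ℝ) {y : E} (hy : y ≠ 0) :
    fderiv ℝ (innerMulNormSqRpow a p) y y = (2 * p + 1) * innerMulNormSqRpow a p y := by
  have hy2 : 0 < ‖y‖ ^ 2 := by positivity
  rw [(hasFDerivAt_innerMulNormSqRpow a p hy).fderiv]
  simp only [innerMulNormSqRpowFDeriv, innerMulNormSqRpow, add_apply, smul_apply,
    coe_innerSL_apply, real_inner_self_eq_norm_sq, smul_eq_mul, Real.rpow_sub_one hy2.ne']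
  field_simp

theorem fderiv_fderiv_innerMulNormSqRpow_apply_self (a : E) (p : ℝ) {y : E} (hy : y ≠ 0)
    (v : E) :
    fderiv ℝ (fderiv ℝ (innerMulNormSqRpow a p)) y v v =
      4 * p * (‖y‖ ^ 2) ^ (p - 1) * ⟪a, v⟫ * ⟪y, v⟫
        + 4 * p * (p - 1) * (‖y‖ ^ 2) ^ (p - 2) * ⟪a, y⟫ * ⟪y, v⟫ ^ 2
        + 2 * p * (‖y‖ ^ 2) ^ (p - 1) * ⟪a, y⟫ * ‖v‖ ^ 2 := by
  have hcoeffDeriv : HasFDerivAt (fun z : E => 2 * p * ⟪a, z⟫ * (‖z‖ ^ 2) ^ (p - 1))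
      ((2 * p * (‖y‖ ^ 2) ^ (p - 1)) • innerSL ℝ a
        + (2 * p * ⟪a, y⟫ * (2 * (p - 1) * (‖y‖ ^ 2) ^ (p - 2))) • innerSL ℝ y) y := by
    have := (((innerSL ℝ a).hasFDerivAt.const_mul (2 * p)).mul
      (hasFDerivAt_norm_sq_rpow (p - 1) hy))
    refine this.congr_fderiv ?_
    ext w
    simp only [coe_innerSL_apply, show p - 1 - 1 = p - 2 by ring, add_apply, smul_apply,
      smul_eq_mul]
    ring
  have hD : HasFDerivAt (innerMulNormSqRpowFDeriv a p) _ y :=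
    (hcoeffDeriv.smul (innerSL ℝ (E := E)).hasFDerivAt).add
      ((hasFDerivAt_norm_sq_rpow p hy).smul (hasFDerivAt_const (innerSL ℝ a) y))
  rw [(fderiv_innerMulNormSqRpow_eventuallyEq a p hy).fderiv_eq, hD.fderiv]
  simp only [smul_zero, zero_add, add_apply, smul_apply, ContinuousLinearMap.smulRight_apply,
    coe_innerSL_apply, smul_eq_mul]
  -- `innerSL ℝ` is conjugate-linear, so as a derivative it is seen through a defeq but
  -- syntactically different coercion, which only `erw` unfolds
  erw [innerSL_apply_apply, innerSL_apply_apply, real_inner_self_eq_norm_sq]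
  ring

end InnerProductSpace

theorem lap_innerMulNormSqRpow {N : ℕ} (a : EuclideanSpace ℝ (Fin N)) (p : ℝ)
    {y : EuclideanSpace ℝ (Fin N)} (hy : y ≠ 0) :
    lap (innerMulNormSqRpow a p) y = 2 * p * (N + 2 * p) * innerMulNormSqRpow a p y / ‖y‖ ^ 2 := by
  have hy2 : 0 < ‖y‖ ^ 2 := by positivity
  have hsq : ∑ i, y i ^ 2 = ‖y‖ ^ 2 := by
    rw [EuclideanSpace.norm_eq, Real.sq_sqrt (by positivity)]
    simp
  have hinner : ∑ i, a i * y i = ⟪a, y⟫ := by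
    simp [PiLp.inner_apply, mul_comm]
  simp only [lap, fderiv_fderiv_innerMulNormSqRpow_apply_self a p hy,
    EuclideanSpace.inner_single_right, PiLp.norm_single, norm_one]
  simp only [Finset.sum_add_distrib, ← Finset.mul_sum]
  simp only [Real.rpow_sub_one hy2.ne', mul_assoc, Real.ringHom_apply, one_mul, ← Finset.mul_sum,
    hinner, show p - 2 = p - 1 - 1 by ring, hsq, one_pow, Finset.sum_const, Finset.card_univ,
    Fintype.card_fin, nsmul_eq_mul, mul_one, innerMulNormSqRpow]
  field_simp
  ring

/-- `Q₊(x) = x_N |x|^{-(N+β)/2}` satisfies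
`ΔQ₊ + β (x·∇Q₊)/|x|² = -[((N-2+β)/2)² + (N-1)] Q₊/|x|²` on the upper half-space. -/
theorem stmt16 {N : ℕ} (hN : 2 ≤ N) (β : ℝ)
    (Q : EuclideanSpace ℝ (Fin N) → ℝ)
    (hQ : Q = fun x => x ⟨N - 1, by omega⟩ * ‖x‖ ^ (-(((N : ℝ) + β) / 2)))
    (x : EuclideanSpace ℝ (Fin N)) (hx : 0 < x ⟨N - 1, by omega⟩) :
    lap Q x + β * fderiv ℝ Q x x / ‖x‖ ^ 2 =
      -(((((N : ℝ) - 2 + β) / 2) ^ 2 + ((N : ℝ) - 1))) * Q x / ‖x‖ ^ 2 := by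
  set p : ℝ := -(((N : ℝ) + β) / 4)
  have hQ' : Q = innerMulNormSqRpow (EuclideanSpace.single ⟨N - 1, by omega⟩ 1) p := by
    ext y
    rw [hQ, innerMulNormSqRpow, EuclideanSpace.inner_single_left, ← Real.rpow_natCast,
      ← Real.rpow_mul (norm_nonneg y)]
    simp only [map_one, one_mul, p]
    congr 2
    push_cast
    ring
  have hx0 : x ≠ 0 := by
    rintro rfl
    simp at hx
  have hcoeff :
      2 * p * (N + 2 * p) + β * (2 * p + 1) = -((((N : ℝ) - 2 + β) / 2) ^ 2 + (N - 1)) := by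
    simp only [p]
    ring
  rw [hQ', lap_innerMulNormSqRpow _ p hx0, fderiv_innerMulNormSqRpow_apply_self _ p hx0,
    ← hcoeff]
  ring
end
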